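/- arXiv:1403.7060 — 3 statements merged into one kernel-verified Lean document; each statement's English description precedes it below -/
import Mathlib

section
/- Let $(V,L)$ be a Lorentz-Minkowski space, i.e. $V$ a finite-dimensional real vector space and $L\colon V\setminus\{0\}\to\mathbb{R}$ a $C^2$ function positively homogeneous of degree $2$ whose fiberwise Hessian $g_v$ is nondegenerate of Lorentzian signature $(-,+,\dots,+)$ for all $v\neq 0$. Then the set of timelike vectors $I=\{v\neq 0: g_v(v,v)<0\}$ is nonempty. -/
/-!
Minimize `L` over the unit sphere at `v`, with value `m`. By homogeneity `L y ≥ m ‖y‖²` for all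
`y`, with equality at `v`, so `L - m ‖·‖²` has a minimum at `v` and its Hessian there is positive
semidefinite: `g_v(w, w) ≥ 2 m ‖w‖²`. A `g_v`-timelike `w` then forces `m < 0`, and Euler's
relation `g_v(v, v) = 2 L v = 2 m` makes `v` itself timelike.
-/

open Set

/-- The fiberwise Hessian `g_v(w,u)` of a Finsler Lagrangian `L`. -/
noncomputable def FinslerHess {m : ℕ} (L : EuclideanSpace ℝ (Fin m) → ℝ)
    (v w u : EuclideanSpace ℝ (Fin m)) : ℝ :=
  fderiv ℝ (fderiv ℝ L) v w u

open Filter Topology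

-- If `f''(a) < 0`, the second derivative test makes `a` a local maximum as well, so `f` is
-- locally constant and `f''(a) = 0`.
theorem IsLocalMin.deriv_deriv_nonneg {f : ℝ → ℝ} {a : ℝ} (hmin : IsLocalMin f a)
    (hc : ContinuousAt f a) : 0 ≤ deriv (deriv f) a := by
  by_contra! hneg
  have hmax : IsLocalMax f a := isLocalMax_of_deriv_deriv_neg hneg hmin.deriv_eq_zero hc
  have hconst : f =ᶠ[𝓝 a] fun _ => f a := by
    filter_upwards [hmin, hmax] with x h₁ h₂ using le_antisymm h₂ h₁
  have hzero : deriv (deriv f) a = 0 := by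
    rw [hconst.deriv.deriv_eq]
    simp
  exact hneg.ne hzero

section SecondDerivative

variable {E F : Type*} [NormedAddCommGroup E] [NormedSpace ℝ E]
  [NormedAddCommGroup F] [NormedSpace ℝ F]

theorem ContDiffAt.deriv_deriv_comp_line {f : E → F} {x : E} (hf : ContDiffAt ℝ 2 f x) (w : E) :
    deriv (deriv fun t : ℝ => f (x + t • w)) 0 = fderiv ℝ (fderiv ℝ f) x w w := by
  have hline : ∀ t : ℝ, HasDerivAt (fun t : ℝ => x + t • w) w t := fun t => by
    simpa using ((hasDerivAt_id t).smul_const w).const_add x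
  have hdiff : ∀ᶠ t in 𝓝 (0 : ℝ), DifferentiableAt ℝ f (x + t • w) := by
    have hnear := (hline 0).continuousAt.eventually (by simpa using hf.eventually (by simp))
    filter_upwards [hnear] with t ht using ht.differentiableAt (by norm_num)
  have hderiv : deriv (fun t : ℝ => f (x + t • w)) =ᶠ[𝓝 0]
      fun t => fderiv ℝ f (x + t • w) w := by
    filter_upwards [hdiff] with t ht
    exact (ht.hasFDerivAt.comp_hasDerivAt t (hline t)).deriv
  have hf' : HasFDerivAt (fderiv ℝ f) (fderiv ℝ (fderiv ℝ f) x) (x + (0 : ℝ) • w) := by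
    simpa using ((hf.fderiv_right (m := 1) le_rfl).differentiableAt one_ne_zero).hasFDerivAt
  rw [hderiv.deriv_eq]
  exact ((ContinuousLinearMap.apply ℝ F w).hasFDerivAt.comp_hasDerivAt 0
    (hf'.comp_hasDerivAt 0 (hline 0))).deriv

theorem IsLocalMin.fderiv_fderiv_nonneg {f : E → ℝ} {x : E} (hmin : IsLocalMin f x)
    (hf : ContDiffAt ℝ 2 f x) (w : E) : 0 ≤ fderiv ℝ (fderiv ℝ f) x w w := by
  set line : ℝ → E := fun t => x + t • w
  have hline : ContinuousAt line 0 := by fun_prop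
  have hmin' : IsLocalMin f (x + (0 : ℝ) • w) := by simpa using hmin
  have hc : ContinuousAt f (x + (0 : ℝ) • w) := by simpa using hf.continuousAt
  rw [← hf.deriv_deriv_comp_line w]
  exact (hmin'.comp_continuous (g := line) hline).deriv_deriv_nonneg
    (hc.comp (g := f) (f := line) hline)

theorem fderiv_fderiv_sub {f g : E → F} {x : E} (hf : ContDiffAt ℝ 2 f x)
    (hg : ContDiffAt ℝ 2 g x) :
    fderiv ℝ (fderiv ℝ (f - g)) x = fderiv ℝ (fderiv ℝ f) x - fderiv ℝ (fderiv ℝ g) x := by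
  have h : fderiv ℝ (f - g) =ᶠ[𝓝 x] fderiv ℝ f - fderiv ℝ g := by
    filter_upwards [hf.eventually (by simp), hg.eventually (by simp)] with y hfy hgy
    exact fderiv_sub (hfy.differentiableAt (by norm_num)) (hgy.differentiableAt (by norm_num))
  rw [h.fderiv_eq]
  exact fderiv_sub ((hf.fderiv_right (m := 1) le_rfl).differentiableAt one_ne_zero)
    ((hg.fderiv_right (m := 1) le_rfl).differentiableAt one_ne_zero)

theorem fderiv_fderiv_const_mul_norm_sq {H : Type*} [NormedAddCommGroup H]
    [InnerProductSpace ℝ H] (c : ℝ) (x w : H) :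
    fderiv ℝ (fderiv ℝ fun y : H => c * ‖y‖ ^ 2) x w w = 2 * c * ‖w‖ ^ 2 := by
  have h : fderiv ℝ (fun y : H => c * ‖y‖ ^ 2) = ⇑(c • 2 • innerSL ℝ : H →L[ℝ] H →L[ℝ] ℝ) :=
    funext fun y => ((hasStrictFDerivAt_norm_sq y).hasFDerivAt.const_mul c).fderiv
  rw [h, ContinuousLinearMap.fderiv]
  simp only [smul_apply, nsmul_eq_mul, Nat.cast_ofNat, smul_eq_mul]
  rw [innerSL_apply_apply, real_inner_self_eq_norm_sq]
  ring

end SecondDerivative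

section Homogeneous

variable {E : Type*} [NormedAddCommGroup E] [NormedSpace ℝ E] {L : E → ℝ}

theorem fderiv_fderiv_apply_self_of_homogeneous
    (hhom : ∀ s : ℝ, 0 < s → ∀ v, L (s • v) = s ^ 2 * L v) {v : E} (hL : ContDiffAt ℝ 2 L v) :
    fderiv ℝ (fderiv ℝ L) v v v = 2 * L v := by
  have hline : (fun t : ℝ => L (v + t • v)) =ᶠ[𝓝 0] fun t => (1 + t) ^ 2 * L v := by
    filter_upwards [eventually_gt_nhds (neg_one_lt_zero : (-1 : ℝ) < 0)] with t ht
    rw [show v + t • v = (1 + t) • v by module, hhom _ (by linarith)]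
  have hderiv : deriv (fun t : ℝ => (1 + t) ^ 2 * L v) = fun t => 2 * (1 + t) * L v := by
    ext t
    simpa using (((hasDerivAt_id t).const_add 1).pow 2 |>.mul_const (L v)).deriv
  rw [← hL.deriv_deriv_comp_line, hline.deriv.deriv_eq, hderiv]
  simp

theorem norm_sq_mul_le_of_isMinOn_sphere
    (hhom : ∀ s : ℝ, 0 < s → ∀ v, L (s • v) = s ^ 2 * L v) {v : E}
    (hv : IsMinOn L (Metric.sphere 0 1) v) (y : E) : ‖y‖ ^ 2 * L v ≤ L y := by
  rcases eq_or_ne y 0 with rfl | hy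
  · have h := hhom 2 two_pos 0
    rw [smul_zero] at h
    simp only [norm_zero]
    linarith
  · have hy' : 0 < ‖y‖ := norm_pos_iff.mpr hy
    have hunit : ‖y‖⁻¹ • y ∈ Metric.sphere (0 : E) 1 := by
      simp [norm_smul, hy'.ne']
    calc ‖y‖ ^ 2 * L v ≤ ‖y‖ ^ 2 * L (‖y‖⁻¹ • y) := by gcongr; exact hv hunit
      _ = L y := by rw [← hhom _ hy', smul_inv_smul₀ hy'.ne']

end Homogeneous

theorem two_mul_mul_norm_sq_le_fderiv_fderiv_of_isMinOn_sphere {H : Type*}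
    [NormedAddCommGroup H] [InnerProductSpace ℝ H] {L : H → ℝ}
    (hhom : ∀ s : ℝ, 0 < s → ∀ v, L (s • v) = s ^ 2 * L v) {v : H}
    (hvs : v ∈ Metric.sphere 0 1) (hv : IsMinOn L (Metric.sphere 0 1) v)
    (hL : ContDiffAt ℝ 2 L v) (w : H) :
    2 * L v * ‖w‖ ^ 2 ≤ fderiv ℝ (fderiv ℝ L) v w w := by
  have hv1 : ‖v‖ = 1 := by simpa using hvs
  have hmin : IsLocalMin (L - fun y => L v * ‖y‖ ^ 2) v := by
    refine IsMinOn.isLocalMin (s := univ) (fun y _ => ?_) univ_mem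
    have hy := norm_sq_mul_le_of_isMinOn_sphere hhom hv y
    simp only [mem_ofPred_eq, Pi.sub_apply, hv1]
    linarith
  have hQ : ContDiffAt ℝ 2 (fun y : H => L v * ‖y‖ ^ 2) v :=
    contDiffAt_const.mul (contDiff_norm_sq ℝ).contDiffAt
  have hhess := hmin.fderiv_fderiv_nonneg (hL.sub hQ) w
  rw [fderiv_fderiv_sub hL hQ, sub_apply, sub_apply, fderiv_fderiv_const_mul_norm_sq] at hhess
  linarith

/-- In a Lorentz-Minkowski space, the set of timelike vectors is nonempty. -/
theorem timelike_nonempty (n : ℕ) (L : EuclideanSpace ℝ (Fin (n + 1)) → ℝ)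
    (hC2 : ContDiffOn ℝ 2 L {(0 : EuclideanSpace ℝ (Fin (n + 1)))}ᶜ)
    (hhom : ∀ s : ℝ, 0 < s → ∀ v, L (s • v) = s ^ 2 * L v)
    (hLor : ∀ v : EuclideanSpace ℝ (Fin (n + 1)), v ≠ 0 →
      ∃ φ : EuclideanSpace ℝ (Fin (n + 1)) ≃ₗ[ℝ] ℝ × EuclideanSpace ℝ (Fin n),
        ∀ w u, FinslerHess L v w u
          = -((φ w).1 * (φ u).1) + (inner ℝ (φ w).2 (φ u).2 : ℝ)) :
    ({v : EuclideanSpace ℝ (Fin (n + 1)) | v ≠ 0 ∧ FinslerHess L v v v < 0}).Nonempty := by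
  have hsphere : Metric.sphere (0 : EuclideanSpace ℝ (Fin (n + 1))) 1 ⊆ {0}ᶜ := fun x hx h => by
    simp_all
  obtain ⟨v, hv, hmin⟩ := (isCompact_sphere (0 : EuclideanSpace ℝ (Fin (n + 1))) 1).exists_isMinOn
    (NormedSpace.sphere_nonempty.mpr zero_le_one) (hC2.continuousOn.mono hsphere)
  have hv0 : v ≠ 0 := hsphere hv
  have hL : ContDiffAt ℝ 2 L v := hC2.contDiffAt (isOpen_compl_singleton.mem_nhds hv0)
  obtain ⟨φ, hφ⟩ := hLor v hv0
  set w := φ.symm (1, 0)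
  have hw : FinslerHess L v w w = -1 := by simp [w, hφ]
  have hbound := two_mul_mul_norm_sq_le_fderiv_fderiv_of_isMinOn_sphere hhom hv hmin hL w
  have hEuler := fderiv_fderiv_apply_self_of_homogeneous hhom hL
  refine ⟨v, hv0, ?_⟩
  unfold FinslerHess at hw ⊢
  nlinarith [sq_nonneg ‖w‖]
end

section
/- Let $(V,L)$ be a Lorentz-Minkowski space and for $c>0$ let $J(c)=\{v\neq 0: g_v(v,v)\le -c^2\}$. Then every connected component of $J(c)$ is strictly convex: for distinct $v_1,v_2$ in the same component and $\alpha\in(0,1)$, the point $(1-\alpha)v_1+\alpha v_2$ lies in the interior of that component, in particular $2L((1-\alpha)v_1+\alpha v_2)< -c^2$. -/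
open Set

/-!
On the timelike cone `{L < 0}` put `F = lorentzNorm L = √(-2L)`, so that `J(c) = {F ≥ c}`.
Along a segment `σ(t) = x + t (y - x)` inside the cone, Euler's identities `g_σ(σ, ·) = dL_σ`
and `g_σ(σ, σ) = 2L(σ)` give `(F ∘ σ)'' = (g_σ(σ,σ) g_σ(u,u) - g_σ(σ,u)²) / F³` with
`u = y - x`. This is `≤ 0` by the reverse Cauchy–Schwarz inequality of a Lorentzian form at a
timelike vector, and `< 0` when `u` is not parallel to `σ`. So `F` is concave along timelike
segments; hence the points of a component of `{L < 0}` that are joined to a fixed point by a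
timelike segment form an open and relatively closed subset, and every component of `{L < 0}` is
convex. Two points of a component of `J(c)` therefore span a segment on which `F ≥ c`, and
`F > c` strictly inside it: by strict concavity, or, when `v₂` is a positive multiple of `v₁`,
because `F` is linear along the ray and `F v₁ ≠ F v₂`. The open set `{F > c}` then gives the
interior point.
-/

open AffineMap Filter Topology
open scoped RealInnerProductSpace

section Topology

variable {E : Type*} [NormedAddCommGroup E] [NormedSpace ℝ E]

theorem lineMap_mem_connectedComponentIn {S : Set E} {x y : E}
    (h : ∀ t ∈ Icc (0 : ℝ) 1, lineMap x y t ∈ S) {t : ℝ} (ht : t ∈ Icc (0 : ℝ) 1) :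
    lineMap x y t ∈ connectedComponentIn S x := by
  refine (isPreconnected_Icc.image _ (lineMap_continuous (R := ℝ)).continuousOn)
    |>.subset_connectedComponentIn ⟨0, left_mem_Icc.2 zero_le_one, lineMap_apply_zero x y⟩ ?_
    (mem_image_of_mem _ ht)
  rintro _ ⟨s, hs, rfl⟩
  exact h s hs

theorem convex_connectedComponentIn_setOf_pos {F : E → ℝ} (hF : Continuous F)
    (hF_seg : ∀ x y : E, (∀ t ∈ Icc (0 : ℝ) 1, 0 < F (lineMap x y t)) →
      ∀ t ∈ Icc (0 : ℝ) 1, min (F x) (F y) ≤ F (lineMap x y t)) (x₀ : E) :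
    Convex ℝ (connectedComponentIn {v | 0 < F v} x₀) := by
  set T := {v | 0 < F v}
  have hT : IsOpen T := isOpen_lt continuous_const hF
  refine convex_iff_segment_subset.2 fun x hx y hy => ?_
  rw [connectedComponentIn_eq hx] at hy ⊢
  have hxT : x ∈ T := connectedComponentIn_subset _ _ hx
  set D := {w | ∀ t ∈ Icc (0 : ℝ) 1, 0 < F (lineMap x w t)}
  have hline : Continuous fun p : E × ℝ => lineMap x p.1 p.2 := by
    simp only [lineMap_apply_module']
    fun_prop
  have hDopen : IsOpen D := isOpen_iff_eventually.2 fun w hw =>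
    isCompact_Icc.eventually_forall_of_forall_eventually fun t ht =>
      (hline.continuousAt (x := (w, t))).eventually (hT.mem_nhds (hw t ht))
  -- The bound `min (F x) (F w) ≤ F` on the segment `[x, w]` passes to limits in `w`.
  have hDclosed : closure D ∩ connectedComponentIn T x ⊆ D := by
    rintro w ⟨hwD, hwC⟩ t ht
    have hwT : w ∈ T := connectedComponentIn_subset _ _ hwC
    have hclosed : IsClosed {w | ∀ t ∈ Icc (0 : ℝ) 1, min (F x) (F w) ≤ F (lineMap x w t)} := by
      simp only [ofPred_forall]
      exact isClosed_biInter fun t _ => isClosed_le (by fun_prop)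
        (hF.comp (hline.comp (continuous_id.prodMk continuous_const)))
    exact (lt_min hxT hwT).trans_le
      (closure_minimal (fun w hw => hF_seg x w hw) hclosed hwD t ht)
  have hCD : connectedComponentIn T x ⊆ D :=
    isPreconnected_connectedComponentIn.subset_of_closure_inter_subset hDopen
      ⟨x, mem_connectedComponentIn hxT, fun t _ => by rw [lineMap_same_apply]; exact hxT⟩ hDclosed
  rw [segment_eq_image_lineMap]
  rintro _ ⟨t, ht, rfl⟩
  exact lineMap_mem_connectedComponentIn (fun s hs => hCD hy s hs) ht

end Topology

theorem mem_interior_connectedComponentIn {X : Type*} [TopologicalSpace X]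
    [LocallyConnectedSpace X] {S U : Set X} {x p : X} (hU : IsOpen U) (hUS : U ⊆ S) (hpU : p ∈ U)
    (hp : p ∈ connectedComponentIn S x) : p ∈ interior (connectedComponentIn S x) := by
  rw [connectedComponentIn_eq hp]
  exact mem_interior.2 ⟨connectedComponentIn U p, connectedComponentIn_mono p hUS,
    hU.connectedComponentIn, mem_connectedComponentIn hpU⟩

theorem strictConcaveOn_of_hasDerivAt2_neg {D : Set ℝ} (hD : Convex ℝ D) {f f' f'' : ℝ → ℝ}
    (hf : ContinuousOn f D) (hf' : ∀ x ∈ interior D, HasDerivAt f (f' x) x)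
    (hf'' : ∀ x ∈ interior D, HasDerivAt f' (f'' x) x) (hf''₀ : ∀ x ∈ interior D, f'' x < 0) :
    StrictConcaveOn ℝ D f := by
  have hanti : StrictAntiOn f' (interior D) :=
    strictAntiOn_of_hasDerivWithinAt_neg hD.interior
      (fun x hx => (hf'' x hx).continuousAt.continuousWithinAt)
      (fun x hx => (hf'' x (interior_subset hx)).hasDerivWithinAt)
      (fun x hx => hf''₀ x (interior_subset hx))
  exact (hanti.congr fun x hx => (hf' x hx).deriv.symm).strictConcaveOn_of_deriv hD hf

theorem LinearIndependent.lineMap_sub {V : Type*} [AddCommGroup V] [Module ℝ V] {x y : V}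
    (h : LinearIndependent ℝ ![x, y]) (t : ℝ) : LinearIndependent ℝ ![lineMap x y t, y - x] := by
  refine LinearIndependent.pair_iff.2 fun s r hsr => ?_
  obtain ⟨h₁, h₂⟩ := LinearIndependent.pair_iff.1 h (s * (1 - t) - r) (s * t + r) (by
    rw [← hsr, lineMap_apply_module]
    module)
  have hs : s = 0 := by linarith
  subst hs
  exact ⟨rfl, by linarith⟩

namespace LinearMap.BilinForm

variable {V : Type*} [AddCommGroup V] [Module ℝ V] {B : LinearMap.BilinForm ℝ V} {x : V}

theorem apply_sub_div_smul_self (hx : B x x ≠ 0) (y : V) :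
    B x (y - (B x y / B x x) • x) = 0 := by
  simp only [map_sub, map_smul, smul_eq_mul]
  field_simp
  ring

theorem mul_apply_self_eq_sq_add (hB : B.IsSymm) (hx : B x x ≠ 0) (y : V) :
    B x x * B y y =
      B x y ^ 2 + B x x * B (y - (B x y / B x x) • x) (y - (B x y / B x x) • x) := by
  simp only [map_sub, map_smul, LinearMap.sub_apply, LinearMap.smul_apply, smul_eq_mul,
    hB.eq y x]
  field_simp
  ring

namespace IsSymm

variable (hB : B.IsSymm) (hx : B x x < 0) (hpos : ∀ z, B x z = 0 → z ≠ 0 → 0 < B z z)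
include hB hx hpos

theorem reverse_cauchy_schwarz (y : V) : B x x * B y y ≤ B x y ^ 2 := by
  set z := y - (B x y / B x x) • x
  have hz : 0 ≤ B z z := by
    rcases eq_or_ne z 0 with hz | hz
    · simp [hz]
    · exact (hpos z (apply_sub_div_smul_self hx.ne y) hz).le
  rw [mul_apply_self_eq_sq_add hB hx.ne y]
  linarith [mul_nonpos_of_nonpos_of_nonneg hx.le hz]

theorem reverse_cauchy_schwarz_strict {y : V} (hxy : LinearIndependent ℝ ![x, y]) :
    B x x * B y y < B x y ^ 2 := by
  set z := y - (B x y / B x x) • x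
  have hz : z ≠ 0 := fun hz =>
    (LinearIndependent.pair_iff' (hxy.ne_zero 0)).1 hxy _ (sub_eq_zero.1 hz).symm
  rw [mul_apply_self_eq_sq_add hB hx.ne y]
  linarith [mul_neg_of_neg_of_pos hx (hpos z (apply_sub_div_smul_self hx.ne y) hz)]

end IsSymm

end LinearMap.BilinForm

noncomputable def minkowskiForm (k : ℕ) :
    LinearMap.BilinForm ℝ (ℝ × EuclideanSpace ℝ (Fin k)) :=
  LinearMap.mk₂ ℝ (fun p q => -(p.1 * q.1) + ⟪p.2, q.2⟫)
    (fun p p' q => by simp only [Prod.fst_add, Prod.snd_add, inner_add_left]; ring)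
    (fun c p q => by
      simp only [Prod.smul_fst, Prod.smul_snd, real_inner_smul_left, smul_eq_mul]; ring)
    (fun p q q' => by simp only [Prod.fst_add, Prod.snd_add, inner_add_right]; ring)
    (fun c p q => by
      simp only [Prod.smul_fst, Prod.smul_snd, real_inner_smul_right, smul_eq_mul]; ring)

section Minkowski

variable {k : ℕ}

@[simp]
theorem minkowskiForm_apply (p q : ℝ × EuclideanSpace ℝ (Fin k)) :
    minkowskiForm k p q = -(p.1 * q.1) + ⟪p.2, q.2⟫ :=
  rfl

theorem minkowskiForm_isSymm : (minkowskiForm k).IsSymm :=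
  ⟨fun p q => by simp only [minkowskiForm_apply, mul_comm p.1, real_inner_comm p.2]⟩

theorem minkowskiForm_pos_of_orthogonal {x z : ℝ × EuclideanSpace ℝ (Fin k)}
    (hx : minkowskiForm k x x < 0) (hxz : minkowskiForm k x z = 0) (hz : z ≠ 0) :
    0 < minkowskiForm k z z := by
  obtain ⟨a, b⟩ := x
  obtain ⟨e, g⟩ := z
  simp only [minkowskiForm_apply, real_inner_self_eq_norm_sq] at hx hxz ⊢
  have ha : 0 < a * a := by nlinarith [norm_nonneg b]
  have hae : a * e = ⟪b, g⟫ := by linarith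
  rcases eq_or_ne g 0 with rfl | hg
  · have he : e = 0 :=
      (mul_eq_zero.1 (by simpa using hae)).resolve_left fun h => by simp [h] at ha
    exact absurd (by rw [he]; rfl) hz
  have hcs : ⟪b, g⟫ ^ 2 ≤ ‖b‖ ^ 2 * ‖g‖ ^ 2 := by
    rw [← mul_pow, sq_le_sq, abs_mul, abs_norm, abs_norm]
    exact abs_real_inner_le_norm b g
  have hg' : 0 < ‖g‖ ^ 2 := by positivity
  have hsq : a * a * (e * e) < a * a * ‖g‖ ^ 2 := by
    have hae2 : a * a * (e * e) = ⟪b, g⟫ ^ 2 := by rw [← hae]; ring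
    linarith [mul_lt_mul_of_pos_right (show ‖b‖ ^ 2 < a * a by linarith) hg']
  linarith [lt_of_mul_lt_mul_left hsq ha.le]

end Minkowski

section Homogeneous

variable {E : Type*} [NormedAddCommGroup E] [NormedSpace ℝ E] {L : E → ℝ}

theorem HasFDerivAt.apply_self_of_homogeneous {F : Type*} [NormedAddCommGroup F]
    [NormedSpace ℝ F] {G : E → F} {G' : E →L[ℝ] F} {k : ℕ} {v : E} (hG : HasFDerivAt G G' v)
    (hhom : ∀ t : ℝ, 0 < t → G (t • v) = t ^ k • G v) : G' v = (k : ℝ) • G v := by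
  have hray : HasDerivAt (fun t : ℝ => G (t • v)) (G' v) 1 :=
    hG.comp_hasDerivAt_of_eq 1 (by simpa using (hasDerivAt_id (1 : ℝ)).smul_const v)
      (one_smul ℝ v).symm
  have hpow : HasDerivAt (fun t : ℝ => t ^ k • G v) ((k : ℝ) • G v) 1 := by
    simpa using (hasDerivAt_pow k (1 : ℝ)).smul_const (G v)
  exact hray.unique <| hpow.congr_of_eventuallyEq <|
    eventually_of_mem (Ioi_mem_nhds one_pos) fun t ht => hhom t ht

theorem hasFDerivAt_of_contDiffOn_compl_zero (hC2 : ContDiffOn ℝ 2 L {0}ᶜ) {v : E}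
    (hv : v ≠ 0) : HasFDerivAt L (fderiv ℝ L v) v :=
  ((hC2.contDiffAt (isOpen_compl_singleton.mem_nhds hv)).differentiableAt
    (by norm_num)).hasFDerivAt

theorem hasFDerivAt_fderiv_of_contDiffOn_compl_zero (hC2 : ContDiffOn ℝ 2 L {0}ᶜ) {v : E}
    (hv : v ≠ 0) : HasFDerivAt (fderiv ℝ L) (fderiv ℝ (fderiv ℝ L) v) v :=
  (((hC2.contDiffAt (isOpen_compl_singleton.mem_nhds hv)).fderiv_right (m := 1)
    le_rfl).differentiableAt one_ne_zero).hasFDerivAt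

variable (hhom : ∀ s : ℝ, 0 < s → ∀ v, L (s • v) = s ^ 2 * L v)
include hhom

theorem map_zero_of_homogeneous : L 0 = 0 := by
  have h := hhom 2 two_pos 0
  rw [smul_zero] at h
  linarith

theorem ne_zero_of_homogeneous_of_neg {v : E} (hv : L v < 0) : v ≠ 0 := by
  rintro rfl
  exact hv.ne (map_zero_of_homogeneous hhom)

theorem continuous_of_homogeneous [ProperSpace E] (hcont : ContinuousOn L {0}ᶜ) :
    Continuous L := by
  refine continuous_iff_continuousAt.2 fun v => ?_
  rcases eq_or_ne v 0 with rfl | hv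
  · obtain ⟨C, hC⟩ := (isCompact_sphere (0 : E) 1).exists_bound_of_continuousOn
      (hcont.mono fun x hx (h0 : x = 0) => by simp [h0] at hx)
    have hbound : ∀ w, ‖L w‖ ≤ C * ‖w‖ ^ 2 := by
      intro w
      rcases eq_or_ne w 0 with rfl | hw
      · simp [map_zero_of_homogeneous hhom]
      have hr : 0 < ‖w‖ := norm_pos_iff.2 hw
      have hLw : L w = ‖w‖ ^ 2 * L (‖w‖⁻¹ • w) := by
        rw [← hhom _ hr, smul_inv_smul₀ hr.ne']
      rw [hLw, norm_mul, norm_pow, norm_norm, mul_comm]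
      exact mul_le_mul_of_nonneg_right (hC _ (by simp [norm_smul, hr.ne'])) (by positivity)
    have hlim : Tendsto (fun w : E => C * ‖w‖ ^ 2) (𝓝 0) (𝓝 0) := by
      have hcont : Continuous fun w : E => C * ‖w‖ ^ 2 := by fun_prop
      simpa using hcont.tendsto 0
    rw [ContinuousAt, map_zero_of_homogeneous hhom]
    exact squeeze_zero_norm hbound hlim
  · exact hcont.continuousAt (isOpen_compl_singleton.mem_nhds hv)

variable (hC2 : ContDiffOn ℝ 2 L {0}ᶜ)
include hC2

theorem fderiv_smul_of_homogeneous {s : ℝ} (hs : 0 < s) {v : E} (hv : v ≠ 0) :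
    fderiv ℝ L (s • v) = s • fderiv ℝ L v := by
  have hcomp := (hasFDerivAt_of_contDiffOn_compl_zero hC2 (smul_ne_zero hs.ne' hv)).comp v
    ((hasFDerivAt_id v).const_smul s)
  have hscaled : HasFDerivAt (fun w => L (s • w)) (s ^ 2 • fderiv ℝ L v) v := by
    simpa only [hhom s hs] using (hasFDerivAt_of_contDiffOn_compl_zero hC2 hv).const_mul (s ^ 2)
  ext w
  have h := congr($(hcomp.unique hscaled) w)
  simp only [ContinuousLinearMap.comp_apply, smul_apply, ContinuousLinearMap.id_apply, map_smul,
    smul_eq_mul] at h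
  simp only [smul_apply, smul_eq_mul]
  exact mul_left_cancel₀ hs.ne' (by rw [h]; ring)

theorem fderiv_apply_self_of_homogeneous {v : E} (hv : v ≠ 0) : fderiv ℝ L v v = 2 * L v := by
  simpa using (hasFDerivAt_of_contDiffOn_compl_zero hC2 hv).apply_self_of_homogeneous (k := 2)
    fun t ht => hhom t ht v

theorem fderiv_fderiv_apply_self_of_homogeneous_s4 {v : E} (hv : v ≠ 0) :
    fderiv ℝ (fderiv ℝ L) v v = fderiv ℝ L v := by
  simpa using (hasFDerivAt_fderiv_of_contDiffOn_compl_zero hC2 hv).apply_self_of_homogeneous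
    (k := 1) fun t ht => by simpa using fderiv_smul_of_homogeneous hhom hC2 ht hv

theorem fderiv_fderiv_apply_self_self_of_homogeneous {v : E} (hv : v ≠ 0) :
    fderiv ℝ (fderiv ℝ L) v v v = 2 * L v := by
  rw [fderiv_fderiv_apply_self_of_homogeneous_s4 hhom hC2 hv,
    fderiv_apply_self_of_homogeneous hhom hC2 hv]

theorem fderiv_fderiv_apply_self_self_neg {v : E} (hv : L v < 0) :
    fderiv ℝ (fderiv ℝ L) v v v < 0 := by
  rw [fderiv_fderiv_apply_self_self_of_homogeneous hhom hC2
    (ne_zero_of_homogeneous_of_neg hhom hv)]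
  linarith

end Homogeneous

section LorentzNorm

variable {E : Type*} {L : E → ℝ}

noncomputable def lorentzNorm (L : E → ℝ) (v : E) : ℝ :=
  √(-(2 * L v))

theorem lorentzNorm_pos_iff {v : E} : 0 < lorentzNorm L v ↔ L v < 0 := by
  rw [lorentzNorm, Real.sqrt_pos]
  constructor <;> intro h <;> linarith

theorem le_lorentzNorm_iff {c : ℝ} (hc : 0 < c) {v : E} :
    c ≤ lorentzNorm L v ↔ 2 * L v ≤ -c ^ 2 := by
  rw [lorentzNorm, Real.le_sqrt' hc]
  constructor <;> intro h <;> linarith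

theorem lt_lorentzNorm_iff {c : ℝ} (hc : 0 ≤ c) {v : E} :
    c < lorentzNorm L v ↔ 2 * L v < -c ^ 2 := by
  rw [lorentzNorm, Real.lt_sqrt hc]
  constructor <;> intro h <;> linarith

theorem Continuous.lorentzNorm [TopologicalSpace E] (hL : Continuous L) :
    Continuous (lorentzNorm L) :=
  (continuous_const.mul hL).neg.sqrt

variable [NormedAddCommGroup E] [NormedSpace ℝ E]

theorem lorentzNorm_smul (hhom : ∀ s : ℝ, 0 < s → ∀ v, L (s • v) = s ^ 2 * L v) {s : ℝ}
    (hs : 0 < s) (v : E) : lorentzNorm L (s • v) = s * lorentzNorm L v := by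
  rw [lorentzNorm, lorentzNorm, hhom s hs, show -(2 * (s ^ 2 * L v)) = s ^ 2 * -(2 * L v) by ring,
    Real.sqrt_mul (sq_nonneg s), Real.sqrt_sq hs.le]

variable (hhom : ∀ s : ℝ, 0 < s → ∀ v, L (s • v) = s ^ 2 * L v)
    (hC2 : ContDiffOn ℝ 2 L {0}ᶜ) {x y : E}
include hhom hC2

theorem hasDerivAt_lorentzNorm_lineMap {t : ℝ} (ht : L (lineMap x y t) < 0) :
    HasDerivAt (fun s => lorentzNorm L (lineMap x y s))
      (-fderiv ℝ L (lineMap x y t) (y - x) / lorentzNorm L (lineMap x y t)) t := by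
  have hL : HasDerivAt (fun s => -(2 * L (lineMap x y s)))
      (-(2 * fderiv ℝ L (lineMap x y t) (y - x))) t :=
    (((hasFDerivAt_of_contDiffOn_compl_zero hC2 (ne_zero_of_homogeneous_of_neg hhom ht))
      |>.comp_hasDerivAt t hasDerivAt_lineMap).const_mul 2).neg
  refine (hL.sqrt (by linarith)).congr_deriv ?_
  rw [lorentzNorm]
  ring

theorem hasDerivAt_deriv_lorentzNorm_lineMap {t : ℝ} (ht : L (lineMap x y t) < 0) :
    HasDerivAt (fun s => -fderiv ℝ L (lineMap x y s) (y - x) / lorentzNorm L (lineMap x y s))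
      ((fderiv ℝ (fderiv ℝ L) (lineMap x y t) (lineMap x y t) (lineMap x y t) *
          fderiv ℝ (fderiv ℝ L) (lineMap x y t) (y - x) (y - x) -
          fderiv ℝ (fderiv ℝ L) (lineMap x y t) (lineMap x y t) (y - x) ^ 2) /
        lorentzNorm L (lineMap x y t) ^ 3) t := by
  have hσ : lineMap x y t ≠ 0 := ne_zero_of_homogeneous_of_neg hhom ht
  have hdL : HasDerivAt (fun s => -fderiv ℝ L (lineMap x y s) (y - x))
      (-fderiv ℝ (fderiv ℝ L) (lineMap x y t) (y - x) (y - x)) t := by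
    have h := (((hasFDerivAt_fderiv_of_contDiffOn_compl_zero hC2 hσ).comp_hasDerivAt t
      (hasDerivAt_lineMap : HasDerivAt (lineMap x y : ℝ → E) (y - x) t)).clm_apply
      (hasDerivAt_const t (y - x))).neg
    simp only [map_zero, add_zero] at h
    exact h
  have hpos : 0 < lorentzNorm L (lineMap x y t) := lorentzNorm_pos_iff.2 ht
  have hsq : lorentzNorm L (lineMap x y t) ^ 2 = -(2 * L (lineMap x y t)) :=
    Real.sq_sqrt (by linarith)
  refine (hdL.div (hasDerivAt_lorentzNorm_lineMap hhom hC2 ht) hpos.ne').congr_deriv ?_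
  rw [fderiv_fderiv_apply_self_self_of_homogeneous hhom hC2 hσ,
    ← fderiv_fderiv_apply_self_of_homogeneous_s4 hhom hC2 hσ]
  field_simp
  rw [hsq]
  ring

theorem concaveOn_lorentzNorm_lineMap
    (hcs : ∀ v u, fderiv ℝ (fderiv ℝ L) v v v < 0 →
      fderiv ℝ (fderiv ℝ L) v v v * fderiv ℝ (fderiv ℝ L) v u u ≤ fderiv ℝ (fderiv ℝ L) v v u ^ 2)
    (hseg : ∀ t ∈ Icc (0 : ℝ) 1, L (lineMap x y t) < 0) :
    ConcaveOn ℝ (Icc (0 : ℝ) 1) fun t => lorentzNorm L (lineMap x y t) := by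
  refine concaveOn_of_hasDerivWithinAt2_nonpos (convex_Icc 0 1)
    (fun t ht =>
      (hasDerivAt_lorentzNorm_lineMap hhom hC2 (hseg t ht)).continuousAt.continuousWithinAt)
    (fun t ht => (hasDerivAt_lorentzNorm_lineMap hhom hC2
      (hseg t (interior_subset ht))).hasDerivWithinAt)
    (fun t ht => (hasDerivAt_deriv_lorentzNorm_lineMap hhom hC2
      (hseg t (interior_subset ht))).hasDerivWithinAt)
    fun t ht => div_nonpos_of_nonpos_of_nonneg (sub_nonpos.2 (hcs _ _
      (fderiv_fderiv_apply_self_self_neg hhom hC2 (hseg t (interior_subset ht)))))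
      (pow_nonneg (Real.sqrt_nonneg _) 3)

theorem strictConcaveOn_lorentzNorm_lineMap
    (hcs : ∀ v u, fderiv ℝ (fderiv ℝ L) v v v < 0 → LinearIndependent ℝ ![v, u] →
      fderiv ℝ (fderiv ℝ L) v v v * fderiv ℝ (fderiv ℝ L) v u u < fderiv ℝ (fderiv ℝ L) v v u ^ 2)
    (hxy : LinearIndependent ℝ ![x, y]) (hseg : ∀ t ∈ Icc (0 : ℝ) 1, L (lineMap x y t) < 0) :
    StrictConcaveOn ℝ (Icc (0 : ℝ) 1) fun t => lorentzNorm L (lineMap x y t) := by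
  refine strictConcaveOn_of_hasDerivAt2_neg (convex_Icc 0 1)
    (fun t ht =>
      (hasDerivAt_lorentzNorm_lineMap hhom hC2 (hseg t ht)).continuousAt.continuousWithinAt)
    (fun t ht => hasDerivAt_lorentzNorm_lineMap hhom hC2 (hseg t (interior_subset ht)))
    (fun t ht => hasDerivAt_deriv_lorentzNorm_lineMap hhom hC2 (hseg t (interior_subset ht)))
    fun t ht => div_neg_of_neg_of_pos (sub_neg.2 (hcs _ _
      (fderiv_fderiv_apply_self_self_neg hhom hC2 (hseg t (interior_subset ht)))
      (hxy.lineMap_sub t)))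
      (pow_pos (lorentzNorm_pos_iff.2 (hseg t (interior_subset ht))) 3)

theorem min_le_lorentzNorm_lineMap
    (hcs : ∀ v u, fderiv ℝ (fderiv ℝ L) v v v < 0 →
      fderiv ℝ (fderiv ℝ L) v v v * fderiv ℝ (fderiv ℝ L) v u u ≤ fderiv ℝ (fderiv ℝ L) v v u ^ 2)
    (hseg : ∀ t ∈ Icc (0 : ℝ) 1, L (lineMap x y t) < 0) {t : ℝ} (ht : t ∈ Icc (0 : ℝ) 1) :
    min (lorentzNorm L x) (lorentzNorm L y) ≤ lorentzNorm L (lineMap x y t) := by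
  simpa using (concaveOn_lorentzNorm_lineMap hhom hC2 hcs hseg).min_le_of_mem_Icc
    (left_mem_Icc.2 zero_le_one) (right_mem_Icc.2 zero_le_one) ht

theorem lt_lorentzNorm_lineMap
    (hcs : ∀ v u, fderiv ℝ (fderiv ℝ L) v v v < 0 → LinearIndependent ℝ ![v, u] →
      fderiv ℝ (fderiv ℝ L) v v v * fderiv ℝ (fderiv ℝ L) v u u < fderiv ℝ (fderiv ℝ L) v v u ^ 2)
    (hseg : ∀ t ∈ Icc (0 : ℝ) 1, L (lineMap x y t) < 0) (hxy : x ≠ y) {c : ℝ}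
    (hx : c ≤ lorentzNorm L x) (hy : c ≤ lorentzNorm L y) {a : ℝ} (ha : a ∈ Ioo (0 : ℝ) 1) :
    c < lorentzNorm L (lineMap x y a) := by
  have hx₀ : L x < 0 := by simpa using hseg 0 (left_mem_Icc.2 zero_le_one)
  by_cases hind : LinearIndependent ℝ ![x, y]
  · have h := (strictConcaveOn_lorentzNorm_lineMap hhom hC2 hcs hind hseg).2
      (left_mem_Icc.2 zero_le_one) (right_mem_Icc.2 zero_le_one) zero_ne_one
      (sub_pos.2 ha.2) ha.1 (sub_add_cancel 1 a)
    simp only [smul_eq_mul, mul_zero, mul_one, zero_add, lineMap_apply_zero,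
      lineMap_apply_one] at h
    nlinarith [ha.1, ha.2]
  obtain ⟨μ, rfl⟩ : ∃ μ : ℝ, μ • x = y := by
    simpa [LinearIndependent.pair_iff' (ne_zero_of_homogeneous_of_neg hhom hx₀)] using hind
  have hμ : 0 < μ := by
    by_contra! hμ
    have hμ' : 0 < 1 - μ := by linarith
    have h := hseg (1 / (1 - μ)) ⟨by positivity, by rw [div_le_one hμ']; linarith⟩
    rw [lineMap_apply_module, smul_smul, ← add_smul,
      show 1 - 1 / (1 - μ) + 1 / (1 - μ) * μ = 0 by field_simp; ring, zero_smul,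
      map_zero_of_homogeneous hhom] at h
    exact h.false
  have hμ₁ : μ ≠ 1 := by rintro rfl; simp at hxy
  have hxpos := lorentzNorm_pos_iff.2 hx₀
  -- On the ray through `x` the function `F` is linear, and `F x ≠ F (μ • x)`.
  rw [lorentzNorm_smul hhom hμ] at hy
  rw [lineMap_apply_module, smul_smul, ← add_smul,
    lorentzNorm_smul hhom (add_pos (sub_pos.2 ha.2) (mul_pos ha.1 hμ))]
  rcases hμ₁.lt_or_gt with h | h
  · nlinarith [mul_pos (mul_pos (sub_pos.2 ha.2) (sub_pos.2 h)) hxpos]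
  · nlinarith [mul_pos (mul_pos ha.1 (sub_pos.2 h)) hxpos]

theorem convex_connectedComponentIn_setOf_neg [ProperSpace E]
    (hcs : ∀ v u, fderiv ℝ (fderiv ℝ L) v v v < 0 →
      fderiv ℝ (fderiv ℝ L) v v v * fderiv ℝ (fderiv ℝ L) v u u ≤ fderiv ℝ (fderiv ℝ L) v v u ^ 2)
    (x₀ : E) : Convex ℝ (connectedComponentIn {v | L v < 0} x₀) := by
  have hT : {v | L v < 0} = {v | 0 < lorentzNorm L v} := by
    ext v
    exact lorentzNorm_pos_iff.symm
  rw [hT]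
  exact convex_connectedComponentIn_setOf_pos
    (continuous_of_homogeneous hhom hC2.continuousOn).lorentzNorm
    (fun x y hxy t ht => min_le_lorentzNorm_lineMap hhom hC2 hcs
      (fun s hs => lorentzNorm_pos_iff.1 (hxy s hs)) ht) x₀

end LorentzNorm

def HasLorentzianHessian {n : ℕ} (L : EuclideanSpace ℝ (Fin (n + 1)) → ℝ) : Prop :=
  ∀ v, v ≠ 0 → ∃ φ : EuclideanSpace ℝ (Fin (n + 1)) ≃ₗ[ℝ] ℝ × EuclideanSpace ℝ (Fin n),
    ∀ w u, FinslerHess L v w u = minkowskiForm n (φ w) (φ u)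

namespace HasLorentzianHessian

variable {n : ℕ} {L : EuclideanSpace ℝ (Fin (n + 1)) → ℝ} {v : EuclideanSpace ℝ (Fin (n + 1))}

theorem exists_minkowskiForm_neg (h : HasLorentzianHessian L) (hv : FinslerHess L v v v < 0) :
    ∃ φ : EuclideanSpace ℝ (Fin (n + 1)) ≃ₗ[ℝ] ℝ × EuclideanSpace ℝ (Fin n),
      minkowskiForm n (φ v) (φ v) < 0 ∧
        ∀ w u, FinslerHess L v w u = minkowskiForm n (φ w) (φ u) := by
  obtain ⟨φ, hφ⟩ := h v fun hv0 => by simp [hv0, FinslerHess] at hv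
  exact ⟨φ, hφ v v ▸ hv, hφ⟩

theorem mul_le_sq (h : HasLorentzianHessian L) (hv : FinslerHess L v v v < 0) (u) :
    FinslerHess L v v v * FinslerHess L v u u ≤ FinslerHess L v v u ^ 2 := by
  obtain ⟨φ, hφv, hφ⟩ := h.exists_minkowskiForm_neg hv
  simp only [hφ]
  exact minkowskiForm_isSymm.reverse_cauchy_schwarz hφv
    (fun _ => minkowskiForm_pos_of_orthogonal hφv) (φ u)

theorem mul_lt_sq (h : HasLorentzianHessian L) (hv : FinslerHess L v v v < 0) {u}
    (hvu : LinearIndependent ℝ ![v, u]) :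
    FinslerHess L v v v * FinslerHess L v u u < FinslerHess L v v u ^ 2 := by
  obtain ⟨φ, hφv, hφ⟩ := h.exists_minkowskiForm_neg hv
  simp only [hφ]
  refine minkowskiForm_isSymm.reverse_cauchy_schwarz_strict hφv
    (fun _ => minkowskiForm_pos_of_orthogonal hφv) ?_
  have hφvu : φ.toLinearMap ∘ ![v, u] = ![φ v, φ u] := by
    funext i
    fin_cases i <;> rfl
  simpa only [hφvu] using hvu.map' φ.toLinearMap φ.ker

end HasLorentzianHessian

theorem setOf_finslerHess_le_eq {m : ℕ} {L : EuclideanSpace ℝ (Fin m) → ℝ}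
    (hhom : ∀ s : ℝ, 0 < s → ∀ v, L (s • v) = s ^ 2 * L v)
    (hC2 : ContDiffOn ℝ 2 L {0}ᶜ) {c : ℝ} (hc : 0 < c) :
    {v | v ≠ 0 ∧ FinslerHess L v v v ≤ -c ^ 2} = {v | c ≤ lorentzNorm L v} := by
  ext v
  rcases eq_or_ne v 0 with rfl | hv
  · simp [lorentzNorm, map_zero_of_homogeneous hhom, hc.not_ge]
  · rw [mem_ofPred_eq, mem_ofPred_eq, le_lorentzNorm_iff hc, FinslerHess,
      fderiv_fderiv_apply_self_self_of_homogeneous hhom hC2 hv]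
    exact and_iff_right hv

/-- For `c > 0`, each connected component of `J(c)` is strictly convex. -/
theorem Jc_component_strictly_convex (n : ℕ) (L : EuclideanSpace ℝ (Fin (n + 1)) → ℝ)
    (hC2 : ContDiffOn ℝ 2 L {(0 : EuclideanSpace ℝ (Fin (n + 1)))}ᶜ)
    (hhom : ∀ s : ℝ, 0 < s → ∀ v, L (s • v) = s ^ 2 * L v)
    (hLor : ∀ v : EuclideanSpace ℝ (Fin (n + 1)), v ≠ 0 →
      ∃ φ : EuclideanSpace ℝ (Fin (n + 1)) ≃ₗ[ℝ] ℝ × EuclideanSpace ℝ (Fin n),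
        ∀ w u, FinslerHess L v w u
          = -((φ w).1 * (φ u).1) + (inner ℝ (φ w).2 (φ u).2 : ℝ))
    (c : ℝ) (hc : 0 < c)
    (v₁ v₂ : EuclideanSpace ℝ (Fin (n + 1)))
    (hv₁ : v₁ ∈ {v : EuclideanSpace ℝ (Fin (n + 1)) | v ≠ 0 ∧ FinslerHess L v v v ≤ -c ^ 2})
    (hv₂ : v₂ ∈ connectedComponentIn {v : EuclideanSpace ℝ (Fin (n + 1)) | v ≠ 0 ∧ FinslerHess L v v v ≤ -c ^ 2} v₁)
    (hne : v₁ ≠ v₂) (a : ℝ) (ha : a ∈ Set.Ioo (0 : ℝ) 1) :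
    2 * L ((1 - a) • v₁ + a • v₂) < -c ^ 2 ∧
      (1 - a) • v₁ + a • v₂ ∈
        interior (connectedComponentIn
          {v : EuclideanSpace ℝ (Fin (n + 1)) | v ≠ 0 ∧ FinslerHess L v v v ≤ -c ^ 2} v₁) := by
  have hL : HasLorentzianHessian L := hLor
  have hcs := fun v u hv => hL.mul_le_sq (v := v) hv u
  rw [setOf_finslerHess_le_eq hhom hC2 hc] at hv₁ hv₂ ⊢
  rw [← lt_lorentzNorm_iff hc.le, ← lineMap_apply_module]
  have hJT : {v | c ≤ lorentzNorm L v} ⊆ {v | L v < 0} :=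
    fun v hv => lorentzNorm_pos_iff.1 (hc.trans_le hv)
  have hv₂' : c ≤ lorentzNorm L v₂ := connectedComponentIn_subset {v | c ≤ lorentzNorm L v} v₁ hv₂
  have hseg : ∀ t ∈ Icc (0 : ℝ) 1, L (lineMap v₁ v₂ t) < 0 := fun t ht =>
    connectedComponentIn_subset {v | L v < 0} v₁ <|
      (convex_connectedComponentIn_setOf_neg hhom hC2 hcs v₁).lineMap_mem
        (mem_connectedComponentIn (hJT hv₁)) (connectedComponentIn_mono v₁ hJT hv₂) ht
  have hlt := lt_lorentzNorm_lineMap hhom hC2 (fun v u hv hvu => hL.mul_lt_sq hv hvu) hseg hne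
    hv₁ hv₂' ha
  have hFc : IsOpen {v | c < lorentzNorm L v} :=
    isOpen_lt continuous_const (continuous_of_homogeneous hhom hC2.continuousOn).lorentzNorm
  refine ⟨hlt, mem_interior_connectedComponentIn hFc (fun _ hv => le_of_lt (α := ℝ) hv) hlt ?_⟩
  exact lineMap_mem_connectedComponentIn (S := {v | c ≤ lorentzNorm L v}) (fun t ht =>
    (le_min hv₁ hv₂').trans (min_le_lorentzNorm_lineMap hhom hC2 hcs hseg ht))
    (Ioo_subset_Icc_self ha)
end

section
/- Let $(V,L)$ be a Lorentz-Minkowski space, $v_1$ timelike and $v_2$ causal in the same component $J^\alpha$. Then $v_1+v_2$ is timelike and lies in $I^\alpha=\mathrm{Int}\,J^\alpha$. -/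
/-!
By Euler's identities `g_v(v, u) = dL_v(u)` and `g_v(v, v) = 2 L v`, the timelike vectors form the
cone `I = {L < 0}`; let `T` be its component containing `v₁`.

The heart of the proof is that `T` is convex. The pairs `(q, y)` whose segment lies in `I` and
with `g_q(q, y) < 0` form an open set, and it is relatively closed in `T × T`: a limiting segment
could only leave `I` by touching the null cone from inside, and there the Lorentzian signature
of `g` forces the segment to be radial; a limiting `g_q(q, y) = 0` is excluded by following
`L` along the ray `q + t y`, which has a maximum, where `y` would be `g`-orthogonal to a
timelike vector and hence spacelike. Being a convex cone, `T` is closed under addition.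

Next, the causal component of `v₁` lies in the closure of `T`: at a causal `w`, `dL_w ≠ 0` by
nondegeneracy of `g_w`, so `L` strictly decreases along some direction `u` near `w`, and sliding
along `u` joins causal points near `w` to `T` inside `I`. Since `T` is open,
`v₁ + v₂ ∈ T + closure T = T + T ⊆ T`, and `T` lies in the interior of the causal component.
-/

open Set

open Metric Filter Topology

theorem IsPreconnected.subset_of_isClosed_of_forall_nhds {X : Type*} [TopologicalSpace X]
    {s c : Set X} (hs : IsPreconnected s) (hc : IsClosed c) (hne : (s ∩ c).Nonempty)
    (hloc : ∀ x ∈ s ∩ c, ∃ U ∈ 𝓝 x, U ∩ s ⊆ c) : s ⊆ c := by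
  have hint : s ∩ c ⊆ interior (c ∪ sᶜ) := fun x hx => by
    obtain ⟨U, hU, hUc⟩ := hloc x hx
    refine mem_interior_iff_mem_nhds.2 (mem_of_superset hU fun y hy => ?_)
    by_cases hys : y ∈ s
    exacts [Or.inl (hUc ⟨hy, hys⟩), Or.inr hys]
  intro x hx
  by_contra hxc
  have hcover : s ⊆ interior (c ∪ sᶜ) ∪ cᶜ := fun y hy => by
    by_cases hyc : y ∈ c
    exacts [Or.inl (hint ⟨hy, hyc⟩), Or.inr hyc]
  obtain ⟨y, hys, hyU, hyc⟩ := hs _ _ isOpen_interior hc.isOpen_compl hcover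
    (hne.mono fun y hy => ⟨hy.1, hint hy⟩) ⟨x, hx, hxc⟩
  exact (interior_subset hyU).elim hyc fun h => h hys

theorem mem_connectedComponentIn_of_mapsTo {X : Type*} [TopologicalSpace X] {S : Set X}
    {γ : ℝ → X} (hγ : Continuous γ) {a b : ℝ} (hab : a ≤ b) (h : MapsTo γ (Icc a b) S) :
    γ b ∈ connectedComponentIn S (γ a) :=
  (isPreconnected_Icc.image γ hγ.continuousOn).subset_connectedComponentIn
    (mem_image_of_mem γ (left_mem_Icc.2 hab)) h.image_subset
    (mem_image_of_mem γ (right_mem_Icc.2 hab))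

theorem exists_isMaxOn_Ici_of_tendsto_atBot {f : ℝ → ℝ} {a : ℝ} (hf : ContinuousOn f (Ici a))
    (hlim : Tendsto f atTop atBot) : ∃ t ∈ Ici a, IsMaxOn f (Ici a) t := by
  obtain ⟨T, hT⟩ := eventually_atTop.1 (hlim.eventually_le_atBot (f a))
  obtain ⟨t, ht, hmax⟩ := isCompact_Icc.exists_isMaxOn (nonempty_Icc.2 (le_max_left a T))
    (hf.mono Icc_subset_Ici_self)
  refine ⟨t, ht.1, fun x (hx : a ≤ x) => ?_⟩
  rcases le_total x (max a T) with hxT | hxT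
  · exact hmax ⟨hx, hxT⟩
  · exact (hT x (le_of_max_le_right hxT)).trans (hmax ⟨le_rfl, le_max_left a T⟩)

theorem nonpos_of_isMaxFilter_nhdsGT {f f' : ℝ → ℝ} {a c : ℝ} (hmax : IsMaxFilter f (𝓝[>] a) a)
    (hf : ∀ᶠ t in 𝓝 a, HasDerivAt f (f' t) t) (hf' : HasDerivAt f' c a) (h0 : f' a = 0) :
    c ≤ 0 := by
  by_contra! hc
  have hpos : ∀ᶠ t in 𝓝[>] a, 0 < f' t := by
    filter_upwards [nhdsGT_le_nhdsNE a ((hasDerivAt_iff_tendsto_slope.1 hf').eventually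
      (eventually_gt_nhds hc)), self_mem_nhdsWithin] with t ht (hat : a < t)
    exact pos_of_slope_pos hat ht h0
  have hfR : ∀ᶠ t in 𝓝[>] a, HasDerivAt f (f' t) t := nhdsWithin_le_nhds hf
  obtain ⟨b, hab, hb⟩ := ((nhdsGT_basis a).eventually_iff).1 (hpos.and (hfR.and hmax))
  have hmid : (a + b) / 2 ∈ Ioo a b := ⟨by linarith [hab], by linarith [hab]⟩
  have hcont : ContinuousOn f (Icc a ((a + b) / 2)) := fun t ht => by
    rcases ht.1.eq_or_lt with rfl | hat
    · exact hf.self_of_nhds.continuousAt.continuousWithinAt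
    · exact (hb ⟨hat, ht.2.trans_lt hmid.2⟩).2.1.continuousAt.continuousWithinAt
  obtain ⟨ξ, hξ, hξeq⟩ := exists_hasDerivAt_eq_slope f f' hmid.1 hcont
    (fun t ht => (hb ⟨ht.1, ht.2.trans hmid.2⟩).2.1)
  have hle : f ((a + b) / 2) ≤ f a := (hb hmid).2.2
  have hξpos : 0 < f' ξ := (hb ⟨hξ.1, hξ.2.trans hmid.2⟩).1
  rw [hξeq, lt_div_iff₀ (by linarith [hmid.1])] at hξpos
  linarith

variable {E : Type*} [NormedAddCommGroup E] [NormedSpace ℝ E]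
  {F : Type*} [NormedAddCommGroup F] [InnerProductSpace ℝ F]

def minkowski (P Q : ℝ × F) : ℝ := -(P.1 * Q.1) + inner ℝ P.2 Q.2

theorem eq_zero_of_forall_minkowski_eq_zero {P : ℝ × F} (h : ∀ Q, minkowski P Q = 0) :
    P = 0 := by
  obtain ⟨a, b⟩ := P
  have h₁ := h (-a, b)
  simp only [minkowski, real_inner_self_eq_norm_sq] at h₁
  have ha : a = 0 := by nlinarith [sq_nonneg ‖b‖]
  have hb : ‖b‖ = 0 := by nlinarith [sq_nonneg a, norm_nonneg b]
  simp [ha, norm_eq_zero.1 hb]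

theorem exists_eq_smul_of_minkowski_nonpos {P D : ℝ × F} (hP : P ≠ 0)
    (hPP : minkowski P P ≤ 0) (hPD : minkowski P D = 0) (hDD : minkowski D D ≤ 0) :
    ∃ μ : ℝ, D = μ • P := by
  obtain ⟨a, b⟩ := P
  obtain ⟨c, d⟩ := D
  simp only [minkowski, real_inner_self_eq_norm_sq] at hPP hPD hDD
  have ha : a ≠ 0 := by
    rintro rfl
    have hb : ‖b‖ = 0 := by nlinarith [norm_nonneg b]
    simp [norm_eq_zero.1 hb] at hP
  obtain ⟨μ, rfl⟩ : ∃ μ, c = μ * a := ⟨c / a, (div_mul_cancel₀ c ha).symm⟩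
  have hbd : inner ℝ b d = μ * a ^ 2 := by linarith
  -- `‖d - μ b‖² ≤ (μ a)² - 2 μ (μ a²) + μ² a² = 0`
  have hd : ‖d - μ • b‖ ^ 2 ≤ 0 := by
    rw [norm_sub_sq_real, real_inner_smul_right, norm_smul, mul_pow, Real.norm_eq_abs, sq_abs,
      real_inner_comm, hbd]
    nlinarith [mul_le_mul_of_nonneg_left hPP (sq_nonneg μ)]
  have hd' : d = μ • b := sub_eq_zero.1 (norm_eq_zero.1 (by nlinarith [norm_nonneg (d - μ • b)]))
  exact ⟨μ, by simp [hd']⟩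

def IsLorentzian (B : E →L[ℝ] E →L[ℝ] ℝ) (F : Type*) [NormedAddCommGroup F]
    [InnerProductSpace ℝ F] : Prop :=
  ∃ φ : E ≃ₗ[ℝ] ℝ × F, ∀ w u, B w u = minkowski (φ w) (φ u)

namespace IsLorentzian

variable {B : E →L[ℝ] E →L[ℝ] ℝ} {v d : E}

theorem apply_ne_zero (hB : IsLorentzian B F) (hv : v ≠ 0) : B v ≠ 0 := by
  obtain ⟨φ, hφ⟩ := hB
  refine fun h => hv (φ.map_eq_zero_iff.1 (eq_zero_of_forall_minkowski_eq_zero fun Q => ?_))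
  rw [← φ.apply_symm_apply Q, ← hφ, h]
  rfl

theorem exists_eq_smul (hB : IsLorentzian B F) (hv : v ≠ 0) (hvv : B v v ≤ 0) (hvd : B v d = 0)
    (hdd : B d d ≤ 0) : ∃ μ : ℝ, d = μ • v := by
  obtain ⟨φ, hφ⟩ := hB
  rw [hφ] at hvv hvd hdd
  obtain ⟨μ, hμ⟩ := exists_eq_smul_of_minkowski_nonpos (φ.map_ne_zero_iff.2 hv) hvv hvd hdd
  exact ⟨μ, φ.injective (by rw [hμ, map_smul])⟩

theorem pos_of_apply_eq_zero (hB : IsLorentzian B F) (hvv : B v v < 0) (hvd : B v d = 0)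
    (hd : d ≠ 0) : 0 < B d d := by
  by_contra! hdd
  have hv : v ≠ 0 := by rintro rfl; simp at hvv
  obtain ⟨μ, rfl⟩ := hB.exists_eq_smul hv hvv.le hvd hdd
  rw [map_smul, smul_eq_mul, mul_eq_zero] at hvd
  rcases hvd with rfl | h
  · simp at hd
  · exact hvv.ne h

end IsLorentzian

theorem isOpen_setOf_segment_subset {S : Set E} (hS : IsOpen S) :
    IsOpen {p : E × E | segment ℝ p.1 p.2 ⊆ S} := by
  refine isOpen_iff_mem_nhds.2 fun p hp => ?_
  change segment ℝ p.1 p.2 ⊆ S at hp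
  rw [segment_eq_image', image_subset_iff] at hp
  filter_upwards [isCompact_Icc.eventually_forall_of_forall_eventually
    (P := fun p' θ => p'.1 + θ • (p'.2 - p'.1) ∈ S) fun θ hθ =>
    (by fun_prop : Continuous fun x : (E × E) × ℝ => x.1.1 + x.2 • (x.1.2 - x.1.1)).continuousAt
      (x := (p, θ)) |>.eventually_mem (hS.mem_nhds (hp hθ))] with p' hp'
  rw [segment_eq_image', image_subset_iff]
  exact hp'

section Descent

variable {f : E → ℝ} {f' : E → StrongDual ℝ E} {w u : E} {r : ℝ}

theorem Convex.apply_add_smul_lt {s : Set E} (hs : Convex ℝ s)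
    (hf : ∀ x ∈ s, HasFDerivAt f (f' x) x) (hu : ∀ x ∈ s, f' x u < 0) {p : E} {τ : ℝ}
    (hp : p ∈ s) (hpτ : p + τ • u ∈ s) (hτ : 0 < τ) : f (p + τ • u) < f p := by
  obtain ⟨z, hz, hmvt⟩ := domain_mvt (fun x hx => (hf x hx).hasFDerivWithinAt) hs hp hpτ
  have hneg : τ * f' z u < 0 := mul_neg_of_pos_of_neg hτ (hu z (hs.segment_subset hp hpτ hz))
  rw [add_sub_cancel_left, map_smul, smul_eq_mul] at hmvt
  linarith

theorem exists_pos_forall_apply_add_smul_lt (hr : 0 < r)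
    (hf : ∀ x ∈ ball w r, HasFDerivAt f (f' x) x) (hu : ∀ x ∈ ball w r, f' x u < 0) :
    ∃ T > (0 : ℝ), ∀ p ∈ ball w (r / 2), ∀ τ ∈ Ioc 0 T,
      p + τ • u ∈ ball w r ∧ f (p + τ • u) < f p := by
  obtain ⟨T, hT, hTu⟩ : ∃ T > 0, T * ‖u‖ < r / 2 :=
    ⟨r / (2 * (‖u‖ + 1)), by positivity, by
      rw [div_mul_eq_mul_div, div_lt_iff₀ (by positivity)]; nlinarith [norm_nonneg u]⟩
  refine ⟨T, hT, fun p hp τ hτ => ?_⟩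
  have hτu : ‖τ • u‖ < r / 2 := by
    rw [norm_smul, Real.norm_of_nonneg hτ.1.le]
    exact (mul_le_mul_of_nonneg_right hτ.2 (norm_nonneg u)).trans_lt hTu
  have hpτ : p + τ • u ∈ ball w r := by
    rw [mem_ball] at hp ⊢
    calc dist (p + τ • u) w ≤ dist (p + τ • u) p + dist p w := dist_triangle _ _ _
      _ < r := by rw [dist_self_add_left]; linarith
  exact ⟨hpτ, (convex_ball w r).apply_add_smul_lt hf hu
    (ball_subset_ball (by linarith) hp) hpτ hτ.1⟩

/-- Sliding along `u` for a fixed time `T` maps a neighbourhood of `w` into `{f < 0}`, so the path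
`z → z + T • u → y + T • u → y + s • u` stays in `{f < 0}`; and `y + s • u → y` as `s → 0⁺`. -/
theorem exists_ball_mem_closure_connectedComponentIn_of_fderiv_neg (hr : 0 < r)
    (hf : ∀ x ∈ ball w r, HasFDerivAt f (f' x) x) (hu : ∀ x ∈ ball w r, f' x u < 0)
    (hw : f w ≤ 0) :
    ∃ δ > 0, ∀ z ∈ ball w δ, f z < 0 → ∀ y ∈ ball w δ, f y ≤ 0 →
      y ∈ closure (connectedComponentIn {x | f x < 0} z) := by
  obtain ⟨T, hT, hdec⟩ := exists_pos_forall_apply_add_smul_lt hr hf hu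
  have hwT := hdec w (mem_ball_self (half_pos hr)) T ⟨hT, le_rfl⟩
  have hcont : ContinuousAt (fun m => f (m + T • u)) w :=
    ContinuousAt.comp (g := f) (hf _ hwT.1).continuousAt (continuous_add_const _).continuousAt
  obtain ⟨δ, hδ, hδf⟩ :=
    Metric.eventually_nhds_iff_ball.1 (hcont.eventually_lt_const (hwT.2.trans_le hw))
  refine ⟨min δ (r / 2), lt_min hδ (half_pos hr), fun z hz hfz y hy hfy => ?_⟩
  have hzr := ball_subset_ball (min_le_right _ _) hz
  have hyr := ball_subset_ball (min_le_right _ _) hy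
  have hcomp : ∀ s ∈ Ioc 0 T, y + s • u ∈ connectedComponentIn {x | f x < 0} z := by
    intro s hs
    have h₁ : z + T • u ∈ connectedComponentIn {x | f x < 0} z := by
      simpa using mem_connectedComponentIn_of_mapsTo (γ := fun τ => z + τ • u) (by fun_prop)
        hT.le fun τ hτ => by
          rcases hτ.1.eq_or_lt with rfl | hτ₀
          · simpa using hfz
          · exact (hdec z hzr τ ⟨hτ₀, hτ.2⟩).2.trans hfz
    have h₂ : y + T • u ∈ connectedComponentIn {x | f x < 0} (z + T • u) := by
      simpa using mem_connectedComponentIn_of_mapsTo (γ := fun θ => z + θ • (y - z) + T • u)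
        (by fun_prop) zero_le_one fun θ hθ => hδf _ <|
          ball_subset_ball (min_le_left _ _) ((convex_ball w _).add_smul_sub_mem hz hy hθ)
    have h₃ : y + T • u ∈ connectedComponentIn {x | f x < 0} (y + s • u) :=
      mem_connectedComponentIn_of_mapsTo (γ := fun τ => y + τ • u) (by fun_prop) hs.2
        fun τ hτ => (hdec y hyr τ ⟨hs.1.trans_le hτ.1, hτ.2⟩).2.trans_le hfy
    rw [connectedComponentIn_eq h₁, connectedComponentIn_eq h₂, ← connectedComponentIn_eq h₃]
    exact mem_connectedComponentIn ((hdec y hyr s hs).2.trans_le hfy)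
  have hlim : Tendsto (fun s : ℝ => y + s • u) (𝓝[>] 0) (𝓝 y) := by
    have : Tendsto (fun s : ℝ => y + s • u) (𝓝 0) (𝓝 (y + (0 : ℝ) • u)) :=
      (by fun_prop : Continuous fun s : ℝ => y + s • u).tendsto 0
    simpa using this.mono_left nhdsWithin_le_nhds
  exact mem_closure_of_tendsto hlim (mem_of_superset (Ioc_mem_nhdsGT hT) hcomp)

end Descent

variable {L : E → ℝ} {q y v : E}

theorem HasFDerivAt.hasDerivAt_add_smul {G : Type*} [NormedAddCommGroup G] [NormedSpace ℝ G]
    {f : E → G} {f' : E →L[ℝ] G} {p d : E} {t : ℝ} (hf : HasFDerivAt f f' (p + t • d)) :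
    HasDerivAt (fun s : ℝ => f (p + s • d)) (f' d) t := by
  have hline : HasDerivAt (fun s : ℝ => p + s • d) d t := by
    simpa using ((hasDerivAt_id t).smul_const d).const_add p
  exact hf.comp_hasDerivAt t hline

theorem HasFDerivAt.apply_self_of_homogeneous_s12 {f : E → ℝ} {f' : StrongDual ℝ E} {k : ℕ}
    (hf : HasFDerivAt f f' v) (hhom : ∀ s : ℝ, 0 < s → f (s • v) = s ^ k * f v) :
    f' v = k * f v := by
  have h₁ : HasDerivAt (fun s : ℝ => f (0 + s • v)) (f' v) 1 :=
    HasFDerivAt.hasDerivAt_add_smul (by simpa using hf)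
  have h₂ : HasDerivAt (fun s : ℝ => s ^ k * f v) (k * f v) 1 := by
    simpa using (hasDerivAt_pow k (1 : ℝ)).mul_const (f v)
  refine h₁.unique (h₂.congr_of_eventuallyEq ?_)
  filter_upwards [lt_mem_nhds one_pos] with s hs
  simp [hhom s hs]

def IsPosHomogeneous (L : E → ℝ) (k : ℕ) : Prop :=
  ∀ s : ℝ, 0 < s → ∀ v, L (s • v) = s ^ k * L v

theorem IsPosHomogeneous.apply_zero {k : ℕ} (hL : IsPosHomogeneous L k) (hk : k ≠ 0) :
    L 0 = 0 := by
  have h := hL 2 two_pos 0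
  rw [smul_zero] at h
  have h' : ((2 : ℝ) ^ k - 1) * L 0 = 0 := by linear_combination -h
  exact (mul_eq_zero.1 h').resolve_left (sub_ne_zero.2 (one_lt_pow₀ one_lt_two hk).ne')

theorem IsPosHomogeneous.fderiv_apply_self {k : ℕ} (hL : IsPosHomogeneous L k)
    (hv : DifferentiableAt ℝ L v) : fderiv ℝ L v v = k * L v :=
  hv.hasFDerivAt.apply_self_of_homogeneous_s12 fun s hs => hL s hs v

theorem IsPosHomogeneous.ne_zero_of_neg (hL : IsPosHomogeneous L 2) (hv : L v < 0) : v ≠ 0 := by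
  rintro rfl
  exact hv.ne (hL.apply_zero two_ne_zero)

theorem IsPosHomogeneous.smul_neg (hL : IsPosHomogeneous L 2) (hv : L v < 0) {c : ℝ}
    (hc : 0 < c) : L (c • v) < 0 := by
  rw [hL c hc]
  exact mul_neg_of_pos_of_neg (by positivity) hv

theorem IsPosHomogeneous.add_smul_neg_of_segment_subset (hL : IsPosHomogeneous L 2)
    (hseg : segment ℝ q y ⊆ {x | L x < 0}) {t : ℝ} (ht : 0 ≤ t) : L (q + t • y) < 0 := by
  have ht₁ : (0 : ℝ) < 1 + t := by linarith
  have hmem : (1 + t)⁻¹ • q + (t / (1 + t)) • y ∈ segment ℝ q y :=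
    ⟨(1 + t)⁻¹, t / (1 + t), by positivity, by positivity, by field_simp, rfl⟩
  convert hL.smul_neg (hseg hmem) ht₁ using 2
  rw [smul_add, smul_smul, smul_smul, mul_inv_cancel₀ ht₁.ne', mul_div_cancel₀ _ ht₁.ne',
    one_smul]

theorem IsPosHomogeneous.smul_mem_connectedComponentIn (hL : IsPosHomogeneous L 2)
    (hq : q ∈ connectedComponentIn {x | L x < 0} v) {c : ℝ} (hc : 0 < c) :
    c • q ∈ connectedComponentIn {x | L x < 0} v := by
  have hq₀ : q ∈ {x | L x < 0} := connectedComponentIn_subset _ _ hq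
  rw [connectedComponentIn_eq hq]
  refine (convex_segment q (c • q)).isPreconnected.subset_connectedComponentIn
    (left_mem_segment ℝ _ _) ?_ (right_mem_segment ℝ _ _)
  rintro _ ⟨a, b, ha, hb, hab, rfl⟩
  rw [smul_smul, ← add_smul]
  refine hL.smul_neg hq₀ ?_
  rcases hb.eq_or_lt with rfl | hb
  · linarith
  · nlinarith [mul_pos hb hc]

namespace ContDiffOn

theorem hasFDerivAt_of_ne_zero (hC2 : ContDiffOn ℝ 2 L {0}ᶜ) (hv : v ≠ 0) :
    HasFDerivAt L (fderiv ℝ L v) v :=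
  ((hC2.contDiffAt (isOpen_compl_singleton.mem_nhds hv)).differentiableAt
    (by norm_num)).hasFDerivAt

theorem contDiffAt_fderiv_of_ne_zero (hC2 : ContDiffOn ℝ 2 L {0}ᶜ) (hv : v ≠ 0) :
    ContDiffAt ℝ 1 (fderiv ℝ L) v :=
  (hC2.contDiffAt (isOpen_compl_singleton.mem_nhds hv)).fderiv_right (by norm_num)

theorem hasFDerivAt_fderiv_apply (hC2 : ContDiffOn ℝ 2 L {0}ᶜ) (hv : v ≠ 0) (u : E) :
    HasFDerivAt (fun x => fderiv ℝ L x u)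
      ((ContinuousLinearMap.apply ℝ ℝ u).comp (fderiv ℝ (fderiv ℝ L) v)) v :=
  (ContinuousLinearMap.apply ℝ ℝ u).hasFDerivAt.comp v
    ((hC2.contDiffAt_fderiv_of_ne_zero hv).differentiableAt one_ne_zero).hasFDerivAt

theorem continuousAt_fderiv_fderiv_apply (hC2 : ContDiffOn ℝ 2 L {0}ᶜ) {p : E × E}
    (hp : p.1 ≠ 0) : ContinuousAt (fun p : E × E => fderiv ℝ (fderiv ℝ L) p.1 p.1 p.2) p :=
  ((((hC2.contDiffAt_fderiv_of_ne_zero hp).continuousAt_fderiv one_ne_zero).comp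
    continuousAt_fst).clm_apply continuousAt_fst).clm_apply continuousAt_snd

theorem fderiv_fderiv_nonpos_of_isMaxFilter (hC2 : ContDiffOn ℝ 2 L {0}ᶜ) {d : E} {t : ℝ}
    (hne : q + t • d ≠ 0) (hmax : IsMaxFilter (fun r : ℝ => L (q + r • d)) (𝓝[>] t) t)
    (h₀ : fderiv ℝ L (q + t • d) d = 0) : fderiv ℝ (fderiv ℝ L) (q + t • d) d d ≤ 0 := by
  refine nonpos_of_isMaxFilter_nhdsGT hmax ?_
    (by simpa using (hC2.hasFDerivAt_fderiv_apply hne d).hasDerivAt_add_smul) h₀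
  filter_upwards [(by fun_prop : Continuous fun r : ℝ => q + r • d).continuousAt.eventually_ne hne]
    with r hr using (hC2.hasFDerivAt_of_ne_zero hr).hasDerivAt_add_smul

end ContDiffOn

namespace IsPosHomogeneous

theorem fderiv_smul_apply (hL : IsPosHomogeneous L 2) (hC2 : ContDiffOn ℝ 2 L {0}ᶜ)
    (hv : v ≠ 0) {s : ℝ} (hs : 0 < s) (u : E) :
    fderiv ℝ L (s • v) u = s * fderiv ℝ L v u := by
  have h₁ : HasFDerivAt (fun x => L (s • x)) ((fderiv ℝ L (s • v)).comp (s • .id ℝ E)) v :=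
    (hC2.hasFDerivAt_of_ne_zero (smul_ne_zero hs.ne' hv)).comp v
      ((hasFDerivAt_id v).const_smul s)
  have h₂ : HasFDerivAt (fun x => L (s • x)) (s ^ 2 • fderiv ℝ L v) v := by
    rw [show (fun x => L (s • x)) = fun x => s ^ 2 * L x from funext (hL s hs)]
    exact (hC2.hasFDerivAt_of_ne_zero hv).const_mul (s ^ 2)
  have h := congrArg (fun T : StrongDual ℝ E => T u) (h₁.unique h₂)
  simp only [ContinuousLinearMap.comp_apply, FunLike.coe_smul, Pi.smul_apply,
    ContinuousLinearMap.id_apply, map_smul, smul_eq_mul] at h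
  exact mul_left_cancel₀ hs.ne' (by rw [h]; ring)

theorem fderiv_fderiv_apply_self (hL : IsPosHomogeneous L 2) (hC2 : ContDiffOn ℝ 2 L {0}ᶜ)
    (hv : v ≠ 0) (u : E) : fderiv ℝ (fderiv ℝ L) v v u = fderiv ℝ L v u := by
  simpa using (hC2.hasFDerivAt_fderiv_apply hv u).apply_self_of_homogeneous_s12 (k := 1)
    fun s hs => by simpa using hL.fderiv_smul_apply hC2 hv hs u

theorem fderiv_fderiv_apply_self_self (hL : IsPosHomogeneous L 2)
    (hC2 : ContDiffOn ℝ 2 L {0}ᶜ) (hv : v ≠ 0) : fderiv ℝ (fderiv ℝ L) v v v = 2 * L v := by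
  rw [hL.fderiv_fderiv_apply_self hC2 hv,
    hL.fderiv_apply_self (hC2.hasFDerivAt_of_ne_zero hv).differentiableAt]
  norm_num

theorem isOpen_setOf_neg (hL : IsPosHomogeneous L 2) (hC2 : ContDiffOn ℝ 2 L {0}ᶜ) :
    IsOpen {v | L v < 0} :=
  isOpen_iff_mem_nhds.2 fun _ hv =>
    (hC2.hasFDerivAt_of_ne_zero (hL.ne_zero_of_neg hv)).continuousAt.eventually_lt_const hv

theorem closure_setOf_neg_subset (hL : IsPosHomogeneous L 2) (hC2 : ContDiffOn ℝ 2 L {0}ᶜ) :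
    closure {v | L v < 0} ⊆ {v | L v ≤ 0} := by
  intro v hv
  rcases eq_or_ne v 0 with rfl | hv₀
  · exact (hL.apply_zero two_ne_zero).le
  · exact ContinuousWithinAt.closure_le hv
      (hC2.hasFDerivAt_of_ne_zero hv₀).continuousAt.continuousWithinAt
      continuousWithinAt_const fun _ h => le_of_lt h

theorem tendsto_add_smul_atBot (hL : IsPosHomogeneous L 2) (hC2 : ContDiffOn ℝ 2 L {0}ᶜ)
    (hy : L y < 0) (q : E) : Tendsto (fun t : ℝ => L (q + t • y)) atTop atBot := by
  have h₁ : Tendsto (fun t : ℝ => L (y + t⁻¹ • q)) atTop (𝓝 (L y)) :=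
    (hC2.hasFDerivAt_of_ne_zero (hL.ne_zero_of_neg hy)).continuousAt.tendsto.comp
      (by simpa using ((tendsto_inv_atTop_zero (𝕜 := ℝ)).smul_const q).const_add y)
  refine ((tendsto_pow_atTop two_ne_zero).atTop_mul_neg hy h₁).congr' ?_
  filter_upwards [eventually_gt_atTop 0] with t ht
  rw [← hL t ht, smul_add, smul_smul, mul_inv_cancel₀ ht.ne', one_smul, add_comm]

theorem zero_notMem_segment (hL : IsPosHomogeneous L 2) (hC2 : ContDiffOn ℝ 2 L {0}ᶜ)
    (hq : L q < 0) (hy : L y < 0) (hqy : fderiv ℝ (fderiv ℝ L) q q y ≤ 0) :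
    (0 : E) ∉ segment ℝ q y := by
  rintro ⟨a, b, ha, hb, hab, h₀⟩
  have hqq : fderiv ℝ (fderiv ℝ L) q q q < 0 := by
    rw [hL.fderiv_fderiv_apply_self_self hC2 (hL.ne_zero_of_neg hq)]
    linarith
  have h := congrArg (fderiv ℝ (fderiv ℝ L) q q) h₀
  rw [map_add, map_smul, map_smul, map_zero, smul_eq_mul, smul_eq_mul] at h
  obtain rfl : a = 0 := by nlinarith
  obtain rfl : b = 1 := by linarith
  rw [zero_smul, one_smul, zero_add] at h₀
  exact hy.ne (h₀ ▸ hL.apply_zero two_ne_zero)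

end IsPosHomogeneous

structure IsLorentzMinkowski (L : E → ℝ) (F : Type*) [NormedAddCommGroup F]
    [InnerProductSpace ℝ F] : Prop where
  contDiffOn : ContDiffOn ℝ 2 L {0}ᶜ
  isPosHomogeneous : IsPosHomogeneous L 2
  isLorentzian : ∀ v ≠ 0, IsLorentzian (fderiv ℝ (fderiv ℝ L) v) F

namespace IsLorentzMinkowski

theorem exists_eq_smul_of_isLocalMax (hL : IsLorentzMinkowski L F) {d : E} {t : ℝ}
    (hne : q + t • d ≠ 0) (hnull : L (q + t • d) = 0)
    (hmax : IsLocalMax (fun r : ℝ => L (q + r • d)) t) : ∃ μ : ℝ, d = μ • (q + t • d) := by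
  have h₀ : fderiv ℝ L (q + t • d) d = 0 :=
    hmax.hasDerivAt_eq_zero (hL.contDiffOn.hasFDerivAt_of_ne_zero hne).hasDerivAt_add_smul
  refine (hL.isLorentzian _ hne).exists_eq_smul hne ?_ ?_
    (hL.contDiffOn.fderiv_fderiv_nonpos_of_isMaxFilter hne
      (hmax.filter_mono nhdsWithin_le_nhds) h₀)
  · rw [hL.isPosHomogeneous.fderiv_fderiv_apply_self_self hL.contDiffOn hne, hnull, mul_zero]
  · rw [hL.isPosHomogeneous.fderiv_fderiv_apply_self hL.contDiffOn hne, h₀]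

theorem segment_subset_setOf_neg_of_nonpos (hL : IsLorentzMinkowski L F) (hq : L q < 0)
    (hy : L y < 0) (hqy : fderiv ℝ (fderiv ℝ L) q q y ≤ 0) (hseg : ∀ x ∈ segment ℝ q y, L x ≤ 0) :
    segment ℝ q y ⊆ {x | L x < 0} := by
  have h0 := hL.isPosHomogeneous.zero_notMem_segment hL.contDiffOn hq hy hqy
  rw [segment_eq_image'] at hseg h0 ⊢
  rintro _ ⟨t, ht, rfl⟩
  have hne : q + t • (y - q) ≠ 0 := fun h => h0 ⟨t, ht, h⟩
  by_contra hpos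
  have hnull : L (q + t • (y - q)) = 0 := le_antisymm (hseg _ ⟨t, ht, rfl⟩) (not_lt.1 hpos)
  have ht₀ : 0 < t := ht.1.lt_of_ne (by rintro rfl; simp at hnull; linarith)
  have ht₁ : t < 1 := ht.2.lt_of_ne (by rintro rfl; simp at hnull; linarith)
  have hmax : IsLocalMax (fun r : ℝ => L (q + r • (y - q))) t := by
    filter_upwards [Icc_mem_nhds ht₀ ht₁] with r hr
    rw [hnull]
    exact hseg _ ⟨r, hr, rfl⟩
  obtain ⟨μ, hμ⟩ := hL.exists_eq_smul_of_isLocalMax hne hnull hmax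
  set p := q + t • (y - q) with hp
  have hqp : q = (1 - t * μ) • p := by
    rw [sub_smul, one_smul, ← smul_smul, ← hμ, hp]
    abel
  rcases lt_or_ge 0 (1 - t * μ) with ha | ha
  · rw [hqp, hL.isPosHomogeneous _ ha, hnull, mul_zero] at hq
    exact lt_irrefl _ hq
  · -- the segment would pass through `0 = (1 - tμ) p + (tμ - 1) p`
    have hμ₀ : 0 < μ := by nlinarith
    refine h0 ⟨t - μ⁻¹, ⟨?_, ?_⟩, ?_⟩
    · rw [sub_nonneg, inv_le_iff_one_le_mul₀ hμ₀]
      linarith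
    · linarith [inv_pos.2 hμ₀]
    · show q + (t - μ⁻¹) • (y - q) = 0
      rw [hμ, smul_smul]
      conv_lhs => rw [hqp]
      rw [← add_smul, sub_mul, inv_mul_cancel₀ hμ₀.ne']
      simp

/-- If `g_q(q, y) = 0`, then `t ↦ L (q + t y)` has a maximum on `t ≥ 0` (it tends to `-∞`);
there `y` is `g`-orthogonal to the timelike vector `q + t y`, so `L` is strictly convex along `y`,
a contradiction. -/
theorem fderiv_fderiv_neg_of_segment_subset (hL : IsLorentzMinkowski L F)
    (hseg : segment ℝ q y ⊆ {x | L x < 0}) (hqy : fderiv ℝ (fderiv ℝ L) q q y ≤ 0) :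
    fderiv ℝ (fderiv ℝ L) q q y < 0 := by
  obtain ⟨hC2, hhom, hLor⟩ := hL
  have hq : L q < 0 := hseg (left_mem_segment ℝ q y)
  have hy : L y < 0 := hseg (right_mem_segment ℝ q y)
  have hray : ∀ t ∈ Ici (0 : ℝ), L (q + t • y) < 0 := fun t ht =>
    hhom.add_smul_neg_of_segment_subset hseg ht
  have hne : ∀ t ∈ Ici (0 : ℝ), q + t • y ≠ 0 := fun t ht => hhom.ne_zero_of_neg (hray t ht)
  refine hqy.lt_of_ne fun hqy₀ => ?_
  obtain ⟨t, ht, hmax⟩ := exists_isMaxOn_Ici_of_tendsto_atBot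
    (fun t ht => ((hC2.hasFDerivAt_of_ne_zero (hne t ht)).continuousAt.comp
      (f := fun r : ℝ => q + r • y) (by fun_prop)).continuousWithinAt)
    (hhom.tendsto_add_smul_atBot hC2 hy q)
  have h₀ : fderiv ℝ L (q + t • y) y = 0 := by
    rcases (show 0 ≤ t from ht).eq_or_lt with rfl | ht₀
    · rw [zero_smul, add_zero, ← hhom.fderiv_fderiv_apply_self hC2 (hhom.ne_zero_of_neg hq),
        hqy₀]
    · exact (hmax.isLocalMax (Ici_mem_nhds ht₀)).hasDerivAt_eq_zero
        (hC2.hasFDerivAt_of_ne_zero (hne t ht)).hasDerivAt_add_smul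
  have hyy := hC2.fderiv_fderiv_nonpos_of_isMaxFilter (hne t ht) (hmax.filter_mono
    (le_principal_iff.2 (mem_of_superset self_mem_nhdsWithin
      fun r (hr : t < r) => mem_Ici.2 (ht.trans hr.le)))) h₀
  have hyy' := (hLor _ (hne t ht)).pos_of_apply_eq_zero
    (by rw [hhom.fderiv_fderiv_apply_self_self hC2 (hne t ht)]; linarith [hray t ht])
    (by rwa [hhom.fderiv_fderiv_apply_self hC2 (hne t ht)]) (hhom.ne_zero_of_neg hy)
  linarith

/-- The pairs `(q, y)` with `[q, y]` timelike and `g_q(q, y) < 0` form an open set which is also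
relatively closed in `T × T`, `T` a component of the timelike cone; so it contains `T × T`. -/
theorem segment_subset_of_mem_connectedComponentIn (hL : IsLorentzMinkowski L F)
    (hq : q ∈ connectedComponentIn {x | L x < 0} v)
    (hy : y ∈ connectedComponentIn {x | L x < 0} v) : segment ℝ q y ⊆ {x | L x < 0} := by
  have hhom := hL.isPosHomogeneous
  have hC2 := hL.contDiffOn
  set T := connectedComponentIn {x | L x < 0} v
  set U := {p : E × E | segment ℝ p.1 p.2 ⊆ {x | L x < 0} ∧
    fderiv ℝ (fderiv ℝ L) p.1 p.1 p.2 < 0}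
  have hU : IsOpen U := isOpen_iff_mem_nhds.2 fun p hp =>
    inter_mem ((isOpen_setOf_segment_subset (hhom.isOpen_setOf_neg hC2)).mem_nhds hp.1)
      ((hC2.continuousAt_fderiv_fderiv_apply (hhom.ne_zero_of_neg
        (hp.1 (left_mem_segment ℝ _ _)))).eventually_lt_const hp.2)
  have hv : v ∈ {x | L x < 0} := connectedComponentIn_nonempty_iff.1 ⟨q, hq⟩
  have hvv : (v, v) ∈ U := by
    refine ⟨by simpa using hv, ?_⟩
    rw [hhom.fderiv_fderiv_apply_self_self hC2 (hhom.ne_zero_of_neg hv)]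
    exact mul_neg_of_pos_of_neg two_pos hv
  have hcl : closure U ∩ T ×ˢ T ⊆ U := by
    rintro ⟨q', y'⟩ ⟨hcl, hq', hy'⟩
    have hq'₀ : q' ∈ {x | L x < 0} := connectedComponentIn_subset _ _ hq'
    have hy'₀ : y' ∈ {x | L x < 0} := connectedComponentIn_subset _ _ hy'
    have hg : fderiv ℝ (fderiv ℝ L) q' q' y' ≤ 0 := ContinuousWithinAt.closure_le hcl
      (hC2.continuousAt_fderiv_fderiv_apply (p := (q', y'))
        (hhom.ne_zero_of_neg hq'₀)).continuousWithinAt continuousWithinAt_const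
      fun p hp => hp.2.le
    have hle : ∀ x ∈ segment ℝ q' y', L x ≤ 0 := by
      rintro _ ⟨a, b, ha, hb, hab, rfl⟩
      exact hhom.closure_setOf_neg_subset hC2 (map_mem_closure
        (f := fun p : E × E => a • p.1 + b • p.2) (by fun_prop) hcl
        fun p hp => hp.1 ⟨a, b, ha, hb, hab, rfl⟩)
    have hseg := hL.segment_subset_setOf_neg_of_nonpos hq'₀ hy'₀ hg hle
    exact ⟨hseg, hL.fderiv_fderiv_neg_of_segment_subset hseg hg⟩
  have hTT : T ×ˢ T ⊆ U :=
    (isPreconnected_connectedComponentIn.prod isPreconnected_connectedComponentIn)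
      |>.subset_of_closure_inter_subset hU
        ⟨(v, v), ⟨mem_connectedComponentIn hv, mem_connectedComponentIn hv⟩, hvv⟩ hcl
  exact (hTT (mk_mem_prod hq hy)).1

theorem convex_connectedComponentIn (hL : IsLorentzMinkowski L F) (v : E) :
    Convex ℝ (connectedComponentIn {x | L x < 0} v) :=
  convex_iff_segment_subset.2 fun q hq y hy => by
    rw [connectedComponentIn_eq hq]
    exact (convex_segment q y).isPreconnected.subset_connectedComponentIn
      (left_mem_segment ℝ q y) (hL.segment_subset_of_mem_connectedComponentIn hq hy)

theorem add_mem_connectedComponentIn (hL : IsLorentzMinkowski L F)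
    (hq : q ∈ connectedComponentIn {x | L x < 0} v)
    (hy : y ∈ connectedComponentIn {x | L x < 0} v) :
    q + y ∈ connectedComponentIn {x | L x < 0} v := by
  have hmid := hL.convex_connectedComponentIn v hq hy
    (by norm_num : (0 : ℝ) ≤ 1 / 2) (by norm_num : (0 : ℝ) ≤ 1 / 2) (by norm_num)
  convert hL.isPosHomogeneous.smul_mem_connectedComponentIn hmid two_pos using 1
  module

theorem exists_fderiv_apply_neg (hL : IsLorentzMinkowski L F) (hv : v ≠ 0) :
    ∃ u, fderiv ℝ L v u < 0 := by
  have hdL : fderiv ℝ L v ≠ 0 := fun h => (hL.isLorentzian v hv).apply_ne_zero hv <| by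
    ext u
    rw [hL.isPosHomogeneous.fderiv_fderiv_apply_self hL.contDiffOn hv, h]
  obtain ⟨u, hu⟩ := DFunLike.ne_iff.1 hdL
  rcases hu.lt_or_gt with hu | hu
  · exact ⟨u, hu⟩
  · exact ⟨-u, by simpa using hu⟩

theorem exists_ball_mem_closure_connectedComponentIn (hL : IsLorentzMinkowski L F) {w : E}
    (hw : w ≠ 0) (hLw : L w ≤ 0) (hwT : w ∈ closure (connectedComponentIn {x | L x < 0} v)) :
    ∃ δ > 0, ∀ y ∈ ball w δ, L y ≤ 0 → y ∈ closure (connectedComponentIn {x | L x < 0} v) := by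
  obtain ⟨u, hu⟩ := hL.exists_fderiv_apply_neg hw
  have hcont : ContinuousAt (fun x => fderiv ℝ L x u) w :=
    (hL.contDiffOn.hasFDerivAt_fderiv_apply hw u).continuousAt
  have hw' : ∀ᶠ x in 𝓝 w, x ≠ 0 := isOpen_compl_singleton.mem_nhds hw
  obtain ⟨r, hr, hball⟩ :=
    Metric.eventually_nhds_iff_ball.1 (hw'.and (hcont.eventually_lt_const hu))
  obtain ⟨δ, hδ, hδT⟩ := exists_ball_mem_closure_connectedComponentIn_of_fderiv_neg hr
    (fun x hx => hL.contDiffOn.hasFDerivAt_of_ne_zero (hball x hx).1)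
    (fun x hx => (hball x hx).2) hLw
  obtain ⟨z, hzT, hwz⟩ := Metric.mem_closure_iff.1 hwT δ hδ
  have hz : z ∈ {x | L x < 0} := connectedComponentIn_subset _ _ hzT
  refine ⟨δ, hδ, fun y hy hLy => ?_⟩
  rw [connectedComponentIn_eq hzT]
  exact hδT z (by rwa [mem_ball, dist_comm]) hz y hy hLy

theorem connectedComponentIn_causal_subset_closure (hL : IsLorentzMinkowski L F)
    (hv : v ∈ {x | L x < 0}) :
    connectedComponentIn {x | x ≠ 0 ∧ L x ≤ 0} v ⊆
      closure (connectedComponentIn {x | L x < 0} v) := by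
  have hv₀ := hL.isPosHomogeneous.ne_zero_of_neg hv
  refine isPreconnected_connectedComponentIn.subset_of_isClosed_of_forall_nhds isClosed_closure
    ⟨v, mem_connectedComponentIn ⟨hv₀, le_of_lt hv⟩,
      subset_closure (mem_connectedComponentIn hv)⟩ fun w ⟨hwJ, hwT⟩ => ?_
  obtain ⟨hw, hLw⟩ := connectedComponentIn_subset _ _ hwJ
  obtain ⟨δ, hδ, hδT⟩ := hL.exists_ball_mem_closure_connectedComponentIn hw hLw hwT
  exact ⟨ball w δ, ball_mem_nhds w hδ, fun y ⟨hy, hyJ⟩ =>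
    hδT y hy (connectedComponentIn_subset _ _ hyJ).2⟩

end IsLorentzMinkowski

/-- The sum of a timelike and a causal vector in the same component is timelike and lies
in `Iᵅ = Int Jᵅ`. -/
theorem timelike_add_causal (n : ℕ) (L : EuclideanSpace ℝ (Fin (n + 1)) → ℝ)
    (hC2 : ContDiffOn ℝ 2 L {(0 : EuclideanSpace ℝ (Fin (n + 1)))}ᶜ)
    (hhom : ∀ s : ℝ, 0 < s → ∀ v, L (s • v) = s ^ 2 * L v)
    (hLor : ∀ v : EuclideanSpace ℝ (Fin (n + 1)), v ≠ 0 →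
      ∃ φ : EuclideanSpace ℝ (Fin (n + 1)) ≃ₗ[ℝ] ℝ × EuclideanSpace ℝ (Fin n),
        ∀ w u, FinslerHess L v w u
          = -((φ w).1 * (φ u).1) + (inner ℝ (φ w).2 (φ u).2 : ℝ))
    (v₁ v₂ : EuclideanSpace ℝ (Fin (n + 1))) (hv₁ : v₁ ∈ {v : EuclideanSpace ℝ (Fin (n + 1)) | v ≠ 0 ∧ FinslerHess L v v v ≤ 0})
    (ht : FinslerHess L v₁ v₁ v₁ < 0)
    (hv₂ : v₂ ∈ connectedComponentIn {v : EuclideanSpace ℝ (Fin (n + 1)) | v ≠ 0 ∧ FinslerHess L v v v ≤ 0} v₁) :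
    FinslerHess L (v₁ + v₂) (v₁ + v₂) (v₁ + v₂) < 0 ∧
      v₁ + v₂ ∈ interior (connectedComponentIn {v : EuclideanSpace ℝ (Fin (n + 1)) | v ≠ 0 ∧ FinslerHess L v v v ≤ 0} v₁) := by
  have hL : IsLorentzMinkowski L (EuclideanSpace ℝ (Fin n)) := ⟨hC2, hhom, hLor⟩
  have hHess : ∀ v ≠ 0, FinslerHess L v v v = 2 * L v := fun v hv =>
    hL.isPosHomogeneous.fderiv_fderiv_apply_self_self hC2 hv
  have hJ : {v | v ≠ 0 ∧ FinslerHess L v v v ≤ 0} = {v | v ≠ 0 ∧ L v ≤ 0} := by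
    ext v
    refine and_congr_right fun hv => ?_
    rw [hHess v hv]
    constructor <;> intro h <;> linarith
  have hv₁' : v₁ ∈ {x | L x < 0} := show L v₁ < 0 by linarith [hHess v₁ hv₁.1]
  set T := connectedComponentIn {x | L x < 0} v₁
  have hT : IsOpen T := (hL.isPosHomogeneous.isOpen_setOf_neg hC2).connectedComponentIn
  have hsum : v₁ + v₂ ∈ T := by
    have h := Set.add_mem_add (mem_connectedComponentIn hv₁')
      (hL.connectedComponentIn_causal_subset_closure hv₁' (hJ ▸ hv₂))
    rw [hT.add_closure] at h
    obtain ⟨a, ha, b, hb, hab⟩ := h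
    exact hab ▸ hL.add_mem_connectedComponentIn ha hb
  have hTI : T ⊆ {x | L x < 0} := connectedComponentIn_subset _ _
  have hsum₀ : L (v₁ + v₂) < 0 := hTI hsum
  refine ⟨by linarith [hHess _ (hL.isPosHomogeneous.ne_zero_of_neg hsum₀)], ?_⟩
  rw [hJ]
  refine interior_maximal (isPreconnected_connectedComponentIn.subset_connectedComponentIn
    (mem_connectedComponentIn hv₁') fun x hx => ?_) hT hsum
  exact ⟨hL.isPosHomogeneous.ne_zero_of_neg (hTI hx), le_of_lt (hTI hx)⟩
end
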